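/- The Černý automaton on n states, consisting of the cyclic shift permutation matrix and the matrix that fixes all states except mapping state n to state 1, is synchronizing, and (when regarded as a set of nonnegative matrices) is not primitive: no finite product of its two matrices is entrywise positive. -/

import Mathlib

/-!
Both letters act by functions `Fin n → Fin n`, so every product of them is the 0/1 matrix of a
function, which has a single nonzero entry per row and hence is never positive once `n ≥ 2`.
For synchronization, shifting `n - 1` times and then resetting sends `i ↦ i - 1` (truncated at `0`),
so the word `(B ^ (n - 1) * A) ^ (n - 1)` sends every state to `0`.
-/

open Matrix

section TransitionMatrix

variable (R : Type*) [Semiring R] {l m n : Type*} [DecidableEq n]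

def transitionMatrix (f : m → n) : Matrix m n R :=
  of fun i j => if j = f i then 1 else 0

variable {R}

@[simp]
lemma transitionMatrix_apply (f : m → n) (i : m) (j : n) :
    transitionMatrix R f i j = if j = f i then 1 else 0 :=
  rfl

@[simp]
lemma transitionMatrix_id : transitionMatrix R (id : n → n) = 1 := by
  ext i j
  simp [one_apply, eq_comm]

lemma transitionMatrix_mul_transitionMatrix [Fintype m] [DecidableEq m] (f : l → m) (g : m → n) :
    transitionMatrix R f * transitionMatrix R g = transitionMatrix R (g ∘ f) := by
  ext i j
  rw [mul_apply, Finset.sum_eq_single (f i) (fun k _ hk => by simp [hk]) (by simp)]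
  simp

lemma transitionMatrix_pow [Fintype n] (f : n → n) (k : ℕ) :
    transitionMatrix R f ^ k = transitionMatrix R f^[k] := by
  induction k with
  | zero => simp
  | succ k ih =>
    rw [pow_succ, ih, transitionMatrix_mul_transitionMatrix, ← Function.iterate_succ']

lemma exists_transitionMatrix_eq_list_prod [Fintype n] {L : List (Matrix n n R)}
    (hL : ∀ P ∈ L, ∃ f, P = transitionMatrix R f) : ∃ g, L.prod = transitionMatrix R g := by
  induction L with
  | nil => exact ⟨id, by simp⟩
  | cons P L ih =>
    obtain ⟨f, rfl⟩ := hL P List.mem_cons_self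
    obtain ⟨g, hg⟩ := ih fun Q hQ => hL Q (List.mem_cons_of_mem _ hQ)
    exact ⟨g ∘ f, by rw [List.prod_cons, hg, transitionMatrix_mul_transitionMatrix]⟩

lemma not_forall_pos_transitionMatrix [PartialOrder R] [Nonempty m] [Nontrivial n] (f : m → n) :
    ¬ ∀ i j, 0 < transitionMatrix R f i j := by
  intro hpos
  obtain ⟨i⟩ := ‹Nonempty m›
  obtain ⟨j, hj⟩ := exists_ne (f i)
  simpa [hj] using hpos i j

end TransitionMatrix

namespace Cerny

variable {n : ℕ} [NeZero n]

def shift (i : Fin n) : Fin n :=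
  ⟨(i + 1) % n, Nat.mod_lt _ (NeZero.pos n)⟩

def reset (i : Fin n) : Fin n :=
  if (i : ℕ) = n - 1 then 0 else i

lemma val_shift_iterate (k : ℕ) (i : Fin n) : ((shift^[k] i : Fin n) : ℕ) = (i + k) % n := by
  induction k with
  | zero => simp [Nat.mod_eq_of_lt i.isLt]
  | succ k ih =>
    rw [Function.iterate_succ_apply', shift, Fin.val_mk, ih, Nat.mod_add_mod, Nat.add_assoc]

lemma val_reset_shift_iterate_pred (i : Fin n) :
    ((reset (shift^[n - 1] i) : Fin n) : ℕ) = i - 1 := by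
  have hi := i.isLt
  rw [reset, val_shift_iterate]
  rcases Nat.eq_zero_or_pos (i : ℕ) with hi0 | hi0
  · simp [hi0, Nat.mod_eq_of_lt (show n - 1 < n by omega)]
  · have hpred : ((i : ℕ) + (n - 1)) % n = i - 1 := by
      rw [show (i : ℕ) + (n - 1) = i - 1 + n by omega, Nat.add_mod_right,
        Nat.mod_eq_of_lt (by omega)]
    rw [if_neg (by omega), val_shift_iterate, hpred]

lemma reset_comp_shift_iterate_pred_iterate_pred :
    (reset ∘ shift^[n - 1])^[n - 1] = fun _ : Fin n => 0 := by
  have hval : ∀ (k : ℕ) (i : Fin n), (((reset ∘ shift^[n - 1])^[k] i : Fin n) : ℕ) = i - k := by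
    intro k i
    induction k with
    | zero => rfl
    | succ k ih =>
      rw [Function.iterate_succ_apply', Function.comp_apply, val_reset_shift_iterate_pred, ih]
      omega
  funext i
  ext
  rw [hval, Fin.val_zero]
  have := i.isLt
  omega

variable (R : Type*) [Semiring R]

lemma of_eq_transitionMatrix_shift :
    (of fun i j : Fin n => if (j : ℕ) = (i + 1) % n then (1 : R) else 0) =
      transitionMatrix R shift := by
  ext i j
  simp [shift, Fin.ext_iff]

lemma of_eq_transitionMatrix_reset :
    (of fun i j : Fin n =>
      if ((i : ℕ) < n - 1 ∧ j = i) ∨ ((i : ℕ) = n - 1 ∧ (j : ℕ) = 0) then (1 : R) else 0) =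
      transitionMatrix R reset := by
  ext i j
  have := i.isLt
  by_cases hi : (i : ℕ) = n - 1
  · simp [reset, hi]
  · simp [reset, hi, show (i : ℕ) < n - 1 by omega]

end Cerny

open Cerny in
theorem stmt17 (n : ℕ) (hn : 2 ≤ n)
    (B : Matrix (Fin n) (Fin n) ℝ)
    (hB : B = Matrix.of fun i j : Fin n => if (j : ℕ) = ((i : ℕ) + 1) % n then 1 else 0)
    (A : Matrix (Fin n) (Fin n) ℝ)
    (hA : A = Matrix.of fun i j : Fin n =>
      if ((i : ℕ) < n - 1 ∧ j = i) ∨ ((i : ℕ) = n - 1 ∧ (j : ℕ) = 0) then 1 else 0) :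
    (∃ l : List (Matrix (Fin n) (Fin n) ℝ),
        (∀ P ∈ l, P = A ∨ P = B) ∧ l ≠ [] ∧
        ∃ i : Fin n, l.prod = Matrix.of fun _ c => if c = i then (1 : ℝ) else 0) ∧
    ¬ ∃ l : List (Matrix (Fin n) (Fin n) ℝ),
        (∀ P ∈ l, P = A ∨ P = B) ∧ l ≠ [] ∧ ∀ i j, 0 < l.prod i j := by
  have : NeZero n := ⟨by omega⟩
  have : Nontrivial (Fin n) := Fin.nontrivial_iff_two_le.mpr hn
  rw [of_eq_transitionMatrix_shift] at hB
  rw [of_eq_transitionMatrix_reset] at hA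
  subst hA hB
  constructor
  · refine ⟨(List.replicate (n - 1) (List.replicate (n - 1) (transitionMatrix ℝ shift) ++
      [transitionMatrix ℝ reset])).flatten, ?_, ?_, 0, ?_⟩
    · simp +contextual [or_comm]
    · simpa using (by omega : n - 1 ≠ 0)
    · simp only [List.prod_flatten, List.map_replicate, List.prod_replicate, List.prod_append,
        List.prod_singleton, transitionMatrix_pow, transitionMatrix_mul_transitionMatrix,
        reset_comp_shift_iterate_pred_iterate_pred]
      rfl
  · rintro ⟨L, hL, -, hpos⟩
    obtain ⟨g, hg⟩ := exists_transitionMatrix_eq_list_prod fun P hP =>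
      (hL P hP).elim (⟨reset, ·⟩) (⟨shift, ·⟩)
    exact not_forall_pos_transitionMatrix g (hg ▸ hpos)
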